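/- If G is a finite split graph with split partition (C, I), then n(G) ≤ gp(G\bar{G}) ≤ n(G) + 1. -/

import Mathlib

open SimpleGraph

variable {V : Type*}

/-- `v` lies on a geodesic (shortest path) between `u` and `w` in `G`. -/
def liesOnGeodesic (G : SimpleGraph V) (u v w : V) : Prop :=
  G.Reachable u w ∧ G.dist u v + G.dist v w = G.dist u w

/-- `S` is a general position set in `G`: no element of `S` lies on a geodesic
between two other elements of `S`. -/
def isGenPosSet (G : SimpleGraph V) (S : Set V) : Prop :=
  ∀ u ∈ S, ∀ v ∈ S, ∀ w ∈ S, u ≠ v → v ≠ w → u ≠ w → ¬ liesOnGeodesic G u v w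

/-- The general position number `gp(G)` of `G`. -/
noncomputable def gpNum (G : SimpleGraph V) : ℕ :=
  sSup {n : ℕ | ∃ S : Set V, isGenPosSet G S ∧ S.ncard = n}

/-- `S` is a `3`-general position set in `G`: no three vertices of `S` lie on a
common geodesic of length at most `3`. -/
def isGP3Set (G : SimpleGraph V) (S : Set V) : Prop :=
  ∀ u ∈ S, ∀ v ∈ S, ∀ w ∈ S, u ≠ v → v ≠ w → u ≠ w →
    ¬ (liesOnGeodesic G u v w ∧ G.dist u w ≤ 3)

/-- The `3`-general position number `gp₃(G)` of `G`. -/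
noncomputable def gp3Num (G : SimpleGraph V) : ℕ :=
  sSup {n : ℕ | ∃ S : Set V, isGP3Set G S ∧ S.ncard = n}

/-- The complementary prism `G\bar{G}`: the disjoint union of `G` (left copy) and
its complement `Gᶜ` (right copy), together with the perfect matching joining each
vertex to its copy. -/
def compPrism (G : SimpleGraph V) : SimpleGraph (V ⊕ V) where
  Adj x y :=
    match x, y with
    | Sum.inl a, Sum.inl b => G.Adj a b
    | Sum.inr a, Sum.inr b => Gᶜ.Adj a b
    | Sum.inl a, Sum.inr b => a = b
    | Sum.inr a, Sum.inl b => a = b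
  symm := by
    refine ⟨?_⟩
    rintro (a | a) (b | b) h
    · exact (G.adj_comm a b).mp h
    · exact Eq.symm h
    · exact Eq.symm h
    · exact (Gᶜ.adj_comm a b).mp h
  loopless := by
    refine ⟨?_⟩
    rintro (a | a) h
    · exact G.loopless.irrefl a h
    · exact Gᶜ.loopless.irrefl a h

/-- The eccentricity of a vertex: the maximum distance to another vertex. -/
noncomputable def ecc (G : SimpleGraph V) (v : V) : ℕ :=
  sSup (Set.range (G.dist v))

/-- The radius of a graph: the minimum eccentricity. -/
noncomputable def rad (G : SimpleGraph V) : ℕ :=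
  sInf (Set.range (ecc G))

/-- The diameter of a graph: the maximum distance between two vertices. -/
noncomputable def graphDiam (G : SimpleGraph V) : ℕ :=
  sSup {n : ℕ | ∃ u v : V, G.dist u v = n}

/-- `\bar{gp}₃(G)`: the maximum, over all `gp₃`-sets `S` of `G`, of the `3`-general
position number of the subgraph of `Gᶜ` induced by the vertices outside `S`. -/
noncomputable def barGp3 (G : SimpleGraph V) : ℕ :=
  sSup {n : ℕ | ∃ S : Set V, isGP3Set G S ∧ S.ncard = gp3Num G ∧
          gp3Num ((Gᶜ).induce Sᶜ) = n}

/-- A cut vertex: its removal disconnects the graph. -/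
def isCutVertex (G : SimpleGraph V) (v : V) : Prop :=
  ¬ (G.induce {u : V | u ≠ v}).Connected

/-- `B` is the vertex set of a `2`-connected subgraph of `G`:
it has at least `3` vertices and removing any one vertex leaves it connected. -/
def isTwoConnectedSet (G : SimpleGraph V) (B : Set V) : Prop :=
  3 ≤ B.ncard ∧ ∀ v ∈ B, (G.induce (B \ {v})).Connected

/-- A block graph: every maximal `2`-connected subgraph is a clique. -/
def isBlockGraph (G : SimpleGraph V) : Prop :=
  ∀ B : Set V, isTwoConnectedSet G B →
    (∀ B' : Set V, isTwoConnectedSet G B' → B ⊆ B' → B = B') →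
    G.IsClique B

/-- Complete multipartite graph: the vertices can be partitioned (via an
equivalence relation, whose classes are the parts) so that two vertices are
adjacent iff they lie in different parts. -/
def isCompleteMultipartite (G : SimpleGraph V) : Prop :=
  ∃ r : V → V → Prop, Equivalence r ∧ ∀ u v, G.Adj u v ↔ ¬ r u v

/-- The hypercube `Q_n`: binary strings of length `n`, two strings being
adjacent when they differ in exactly one coordinate. -/
def hypercube (n : ℕ) : SimpleGraph (Fin n → Bool) where
  Adj x y := {i : Fin n | x i ≠ y i}.ncard = 1
  symm := by
    refine ⟨?_⟩
    intro x y h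
    simpa [ne_comm] using h
  loopless := by
    refine ⟨?_⟩
    intro x
    simp

/-- The block graph `G_k`: a chain of `k+1` triangles `{vᵢ, uᵢ, vᵢ₊₁}`,
with the `v`-vertices `v₁, …, v_{k+2}` indexed by `Fin (k+2)` (left summand)
and the `u`-vertices `u₁, …, u_{k+1}` indexed by `Fin (k+1)` (right summand);
the edges are `vᵢvᵢ₊₁`, `uᵢvᵢ` and `uᵢvᵢ₊₁`. -/
def Gk (k : ℕ) : SimpleGraph (Fin (k + 2) ⊕ Fin (k + 1)) where
  Adj x y :=
    match x, y with
    | Sum.inl a, Sum.inl b => a.val + 1 = b.val ∨ b.val + 1 = a.val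
    | Sum.inl a, Sum.inr b => a.val = b.val ∨ a.val = b.val + 1
    | Sum.inr a, Sum.inl b => b.val = a.val ∨ b.val = a.val + 1
    | Sum.inr _, Sum.inr _ => False
  symm := by
    refine ⟨?_⟩
    rintro (a | a) (b | b) h
    · exact Or.symm h
    · exact h
    · exact h
    · exact h
  loopless := by
    refine ⟨?_⟩
    rintro (a | a) h
    · omega
    · exact h


/-!
A general position set of `G\bar{G}` contains both copies `u, ū` and `v, v̄` of at most one
vertex: for two such vertices, `ū – u – v` (if `uv ∈ E(G)`) or `u – ū – v̄` (otherwise) is a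
geodesic of length two. Hence it meets the `n(G)` pairs `{v, v̄}` in at most `n(G) + 1`
vertices.
Conversely, for a split partition `(C, I)` the set `C ∪ Ī` has pairwise distances `1` inside `C`
and inside `Ī` and `2` between them; since `1 + 1 = 2` is the only additive relation among these
values, no vertex of it lies on a geodesic between two others.
-/

theorem Set.ncard_image_inl_union_image_inr {α β : Type*} [Finite α] [Finite β]
    (s : Set α) (t : Set β) :
    (Sum.inl '' s ∪ Sum.inr '' t : Set (α ⊕ β)).ncard = s.ncard + t.ncard := by
  rw [Set.ncard_union_eq Set.disjoint_image_inl_image_inr,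
    Set.ncard_image_of_injective _ Sum.inl_injective,
    Set.ncard_image_of_injective _ Sum.inr_injective]

theorem Set.one_lt_ncard_inter_of_card_add_one_lt {α : Type*} [Finite α] {s t : Set α}
    (h : Nat.card α + 1 < s.ncard + t.ncard) : 1 < (s ∩ t).ncard := by
  have := Set.ncard_union_add_ncard_inter s t
  have := Set.ncard_le_card (s ∪ t)
  omega

namespace SimpleGraph

variable {G : SimpleGraph V} {u v w : V}

theorem dist_eq_two_of_adj_of_adj (huv : G.Adj u v) (hvw : G.Adj v w) (huw : u ≠ w)
    (hnadj : ¬ G.Adj u w) : G.dist u w = 2 := by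
  have hle : G.dist u w ≤ 2 := dist_le (.cons huv (.cons hvw .nil))
  have hlt : 1 < G.dist u w :=
    (huv.reachable.trans hvw.reachable).one_lt_dist_of_ne_of_not_adj huw hnadj
  omega

theorem liesOnGeodesic_of_adj_of_adj (huv : G.Adj u v) (hvw : G.Adj v w) (huw : u ≠ w)
    (hnadj : ¬ G.Adj u w) : liesOnGeodesic G u v w := by
  refine ⟨huv.reachable.trans hvw.reachable, ?_⟩
  rw [dist_eq_one_iff_adj.mpr huv, dist_eq_one_iff_adj.mpr hvw,
    dist_eq_two_of_adj_of_adj huv hvw huw hnadj]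

theorem isGenPosSet_of_dist_eq_ite {S : Set V} (f : V → Bool)
    (hdist : ∀ x ∈ S, ∀ y ∈ S, x ≠ y → G.dist x y = if f x = f y then 1 else 2) :
    isGenPosSet G S := by
  rintro x hx y hy z hz hxy hyz hxz ⟨-, hsum⟩
  rw [hdist x hx y hy hxy, hdist y hy z hz hyz, hdist x hx z hz hxz] at hsum
  revert hsum
  cases f x <;> cases f y <;> cases f z <;> decide

theorem isGenPosSet.ncard_le_gpNum [Finite V] {S : Set V} (hS : isGenPosSet G S) :
    S.ncard ≤ gpNum G :=
  le_csSup ⟨Nat.card V, by rintro _ ⟨T, -, rfl⟩; exact T.ncard_le_card⟩ ⟨S, hS, rfl⟩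

theorem gpNum_le {m : ℕ} (h : ∀ S, isGenPosSet G S → S.ncard ≤ m) : gpNum G ≤ m :=
  csSup_le ⟨0, ∅, by simp [isGenPosSet], Set.ncard_empty V⟩
    (by rintro _ ⟨S, hS, rfl⟩; exact h S hS)

end SimpleGraph

namespace compPrism

variable {G : SimpleGraph V} {u v : V}

@[simp]
theorem adj_inl_inl : (compPrism G).Adj (.inl u) (.inl v) ↔ G.Adj u v := Iff.rfl

@[simp]
theorem adj_inr_inr : (compPrism G).Adj (.inr u) (.inr v) ↔ Gᶜ.Adj u v := Iff.rfl

@[simp]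
theorem adj_inl_inr : (compPrism G).Adj (.inl u) (.inr v) ↔ u = v := Iff.rfl

@[simp]
theorem adj_inr_inl : (compPrism G).Adj (.inr u) (.inl v) ↔ u = v := Iff.rfl

theorem dist_inl_inr_of_ne (huv : u ≠ v) : (compPrism G).dist (.inl u) (.inr v) = 2 := by
  have hnadj : ¬ (compPrism G).Adj (.inl u) (.inr v) := huv
  by_cases hG : G.Adj u v
  · exact dist_eq_two_of_adj_of_adj (adj_inl_inl.mpr hG) (adj_inl_inr.mpr rfl) (by simp) hnadj
  · exact dist_eq_two_of_adj_of_adj (adj_inl_inr.mpr rfl) (adj_inr_inr.mpr ⟨huv, hG⟩) (by simp)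
      hnadj

theorem not_isGenPosSet_of_mem_of_mem {S : Set (V ⊕ V)} (huv : u ≠ v)
    (hu : .inl u ∈ S ∧ .inr u ∈ S) (hv : .inl v ∈ S ∧ .inr v ∈ S) :
    ¬ isGenPosSet (compPrism G) S := by
  intro hS
  by_cases hG : G.Adj u v
  · exact hS _ hu.2 _ hu.1 _ hv.1 (by simp) (by simpa) (by simp)
      (liesOnGeodesic_of_adj_of_adj (adj_inr_inl.mpr rfl) (adj_inl_inl.mpr hG) (by simp)
        (by simpa using huv))
  · exact hS _ hu.1 _ hu.2 _ hv.2 (by simp) (by simpa) (by simp)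
      (liesOnGeodesic_of_adj_of_adj (adj_inl_inr.mpr rfl) (adj_inr_inr.mpr ⟨huv, hG⟩) (by simp)
        (by simpa))

theorem isGenPosSet.ncard_le [Finite V] {S : Set (V ⊕ V)} (hS : isGenPosSet (compPrism G) S) :
    S.ncard ≤ Nat.card V + 1 := by
  by_contra! hlt
  rw [← Set.image_preimage_inl_union_image_preimage_inr S,
    Set.ncard_image_inl_union_image_inr] at hlt
  obtain ⟨u, hu, v, hv, huv⟩ :=
    (Set.one_lt_ncard_iff_nontrivial.mp (Set.one_lt_ncard_inter_of_card_add_one_lt hlt))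
  exact not_isGenPosSet_of_mem_of_mem huv hu hv hS

theorem isGenPosSet_image_inl_union_image_inr {C I : Set V} (hdisj : Disjoint C I)
    (hC : G.IsClique C) (hI : ∀ u ∈ I, ∀ w ∈ I, ¬ G.Adj u w) :
    isGenPosSet (compPrism G) (Sum.inl '' C ∪ Sum.inr '' I) := by
  refine isGenPosSet_of_dist_eq_ite Sum.isLeft ?_
  rintro _ (⟨c, hc, rfl⟩ | ⟨i, hi, rfl⟩) _ (⟨c', hc', rfl⟩ | ⟨i', hi', rfl⟩) hne
  · simpa using hC hc hc' (by simpa using hne)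
  · simpa using dist_inl_inr_of_ne (hdisj.ne_of_mem hc hi')
  · simpa [dist_comm] using dist_inl_inr_of_ne (hdisj.ne_of_mem hc' hi)
  · have hii' : i ≠ i' := by simpa using hne
    simpa using ⟨hii', hI i hi i' hi'⟩

end compPrism

/-- For a split graph `G` with split partition `(C, I)`:
`n(G) ≤ gp(G\bar{G}) ≤ n(G) + 1`. -/
theorem gp_compPrism_split_bounds {V : Type*} [Fintype V] (G : SimpleGraph V)
    (C I : Set V) (hunion : C ∪ I = Set.univ) (hdisj : Disjoint C I)
    (hC : G.IsClique C) (hI : ∀ u ∈ I, ∀ w ∈ I, ¬ G.Adj u w) :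
    Fintype.card V ≤ gpNum (compPrism G) ∧ gpNum (compPrism G) ≤ Fintype.card V + 1 := by
  rw [← Nat.card_eq_fintype_card]
  refine ⟨?_, gpNum_le fun S hS => compPrism.isGenPosSet.ncard_le hS⟩
  calc Nat.card V = C.ncard + I.ncard := by
        rw [← Set.ncard_union_eq hdisj, hunion, Set.ncard_univ]
    _ = (Sum.inl '' C ∪ Sum.inr '' I : Set (V ⊕ V)).ncard :=
        (Set.ncard_image_inl_union_image_inr C I).symm
    _ ≤ gpNum (compPrism G) :=
        (compPrism.isGenPosSet_image_inl_union_image_inr hdisj hC hI).ncard_le_gpNum
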